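/- arXiv:hep-th/9302138 — 2 statements merged into one kernel-verified Lean document; each statement's English description precedes it below -/
import Mathlib

section
/- Let L be a complex Lie algebra and suppose elements g₁, g₂, g₃ and families of elements satisfy: √(-1)·[gᵢ⁽⁰⁾, gᵢ⁽ⁿ⁾] = [gᵢ⁽⁰⁾,[gⱼ⁽ᵐ⁾, gₖ⁽ⁿ⁻¹⁻ᵐ⁾]] for all 0 ≤ m ≤ n-1 (with (i,j,k) a cyclic permutation of (1,2,3)), and [gᵢ⁽⁰⁾,gᵢ⁽ⁿ⁾] = -[gⱼ⁽ᵐ⁾,gⱼ⁽ⁿ⁻ᵐ⁾] - [gₖ⁽ⁿ⁻ᵐ⁻¹⁾,gₖ⁽ᵐ⁺¹⁾] for all 0 ≤ m ≤ n-1. If n ≥ 2, then [gᵢ⁽⁰⁾,gᵢ⁽ⁿ⁾] = 0 for all i ∈ {1,2,3}. -/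
/-!
Summing the relation over `m`, both sums collapse to `⁅g 0, g n⁆` by skew-symmetry (the terms
`m` and `n - m` cancel), so `ξᵢ := ⁅gᵢ 0, gᵢ n⁆` satisfy `n • ξᵢ = -ξⱼ - ξₖ`. In characteristic
zero this linear system has only the trivial solution unless `n = 1`.
-/

open Finset

namespace LieRing

variable {L : Type*} [LieRing L]

theorem sum_antidiagonal_lie_eq_zero (g : ℕ → L) (n : ℕ) :
    ∑ p ∈ antidiagonal n, ⁅g p.1, g p.2⁆ = 0 := by
  refine sum_involution (fun p _ ↦ p.swap) (fun p _ ↦ ?_) (fun p _ hp hswap ↦ ?_)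
    (fun p hp ↦ by simpa [add_comm] using hp) (fun p _ ↦ p.swap_swap)
  · rw [Prod.fst_swap, Prod.snd_swap, ← lie_skew, neg_add_cancel]
  · obtain ⟨i, j⟩ := p
    obtain rfl : j = i := congrArg Prod.fst hswap
    exact hp (lie_self _)

theorem sum_range_lie_sub (g : ℕ → L) (n : ℕ) :
    ∑ m ∈ range n, ⁅g m, g (n - m)⁆ = ⁅g 0, g n⁆ := by
  have h := sum_antidiagonal_lie_eq_zero g n
  rw [Nat.sum_antidiagonal_eq_sum_range_succ (fun i j ↦ ⁅g i, g j⁆), sum_range_succ,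
    Nat.sub_self, ← lie_skew] at h
  exact add_neg_eq_zero.mp h

theorem sum_range_lie_sub_one (g : ℕ → L) (n : ℕ) :
    ∑ m ∈ range n, ⁅g (n - m - 1), g (m + 1)⁆ = ⁅g 0, g n⁆ := by
  rw [← sum_range_lie_sub, ← sum_range_reflect]
  refine sum_congr rfl fun m hm ↦ ?_
  have hm : m < n := mem_range.mp hm
  rw [show n - (n - 1 - m) - 1 = m by omega, show n - 1 - m + 1 = n - m by omega]

theorem nsmul_eq_neg_lie_sub_lie {x : L} {p q : ℕ → L} {n : ℕ}
    (h : ∀ m < n, x = -⁅p m, p (n - m)⁆ - ⁅q (n - m - 1), q (m + 1)⁆) :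
    n • x = -⁅p 0, p n⁆ - ⁅q 0, q n⁆ := by
  calc n • x = ∑ m ∈ range n, x := by rw [sum_const, card_range]
    _ = ∑ m ∈ range n, (-⁅p m, p (n - m)⁆ - ⁅q (n - m - 1), q (m + 1)⁆) :=
        sum_congr rfl fun m hm ↦ h m (mem_range.mp hm)
    _ = -⁅p 0, p n⁆ - ⁅q 0, q n⁆ := by
        rw [sum_sub_distrib, sum_neg_distrib, sum_range_lie_sub, sum_range_lie_sub_one]

end LieRing

/-- Summing the three relations gives `(n + 2) • (a + b + c) = 0`, after which each one
reads `n • a = a`. -/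
theorem eq_zero_of_nsmul_eq_neg_sub {M : Type*} [AddCommGroup M] [IsAddTorsionFree M]
    {n : ℕ} (hn : n ≠ 1) {a b c : M}
    (ha : n • a = -b - c) (hb : n • b = -c - a) (hc : n • c = -a - b) :
    a = 0 ∧ b = 0 ∧ c = 0 := by
  have hsum : a + b + c = 0 := by
    refine (nsmul_eq_zero_iff.mp ?_).resolve_right (by omega : n + 2 ≠ 0)
    rw [smul_add, smul_add, add_nsmul, add_nsmul, add_nsmul, ha, hb, hc]
    abel
  have key (x : M) (hx : n • x = x) : x = 0 := by
    obtain _ | _ | k := n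
    · simpa using hx.symm
    · contradiction
    · rw [succ_nsmul, add_eq_right, nsmul_eq_zero_iff] at hx
      exact hx.resolve_right k.succ_ne_zero
  refine ⟨key a (ha.trans ?_), key b (hb.trans ?_), key c (hc.trans ?_)⟩ <;>
    rw [← sub_eq_zero, ← neg_eq_zero, ← hsum] <;> abel

open Complex in
theorem stmt1_general {L : Type*} [LieRing L] [LieAlgebra ℂ L]
    (g₁ g₂ g₃ : ℕ → L) (n : ℕ) (hn : 2 ≤ n)
    (h2 : ∀ m, m ≤ n - 1 →
      (⁅g₁ 0, g₁ n⁆ = -⁅g₂ m, g₂ (n - m)⁆ - ⁅g₃ (n - m - 1), g₃ (m + 1)⁆ ∧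
       ⁅g₂ 0, g₂ n⁆ = -⁅g₃ m, g₃ (n - m)⁆ - ⁅g₁ (n - m - 1), g₁ (m + 1)⁆ ∧
       ⁅g₃ 0, g₃ n⁆ = -⁅g₁ m, g₁ (n - m)⁆ - ⁅g₂ (n - m - 1), g₂ (m + 1)⁆)) :
    ⁅g₁ 0, g₁ n⁆ = 0 ∧ ⁅g₂ 0, g₂ n⁆ = 0 ∧ ⁅g₃ 0, g₃ n⁆ = 0 := by
  have : IsAddTorsionFree L := .of_isTorsionFree ℂ L
  have h (m) (hm : m < n) := h2 m (Nat.le_sub_one_of_lt hm)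
  exact eq_zero_of_nsmul_eq_neg_sub (by omega)
    (LieRing.nsmul_eq_neg_lie_sub_lie fun m hm ↦ (h m hm).1)
    (LieRing.nsmul_eq_neg_lie_sub_lie fun m hm ↦ (h m hm).2.1)
    (LieRing.nsmul_eq_neg_lie_sub_lie fun m hm ↦ (h m hm).2.2)

open Complex in
/-- Lemma 2 counting argument: if
`√-1 • ⁅gᵢ⁽⁰⁾, gᵢ⁽ⁿ⁾⁆ = ⁅gᵢ⁽⁰⁾, ⁅gⱼ⁽ᵐ⁾, gₖ⁽ⁿ⁻¹⁻ᵐ⁾⁆⁆` and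
`⁅gᵢ⁽⁰⁾, gᵢ⁽ⁿ⁾⁆ = -⁅gⱼ⁽ᵐ⁾, gⱼ⁽ⁿ⁻ᵐ⁾⁆ - ⁅gₖ⁽ⁿ⁻ᵐ⁻¹⁾, gₖ⁽ᵐ⁺¹⁾⁆` for all
`0 ≤ m ≤ n-1` and all cyclic permutations `(i,j,k)` of `(1,2,3)`, then for
`n ≥ 2` all `⁅gᵢ⁽⁰⁾, gᵢ⁽ⁿ⁾⁆` vanish. -/
theorem stmt1 {L : Type*} [LieRing L] [LieAlgebra ℂ L]
    (g₁ g₂ g₃ : ℕ → L) (n : ℕ) (hn : 2 ≤ n)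
    (h1 : ∀ m, m ≤ n - 1 →
      (I • ⁅g₁ 0, g₁ n⁆ = ⁅g₁ 0, ⁅g₂ m, g₃ (n - 1 - m)⁆⁆ ∧
       I • ⁅g₂ 0, g₂ n⁆ = ⁅g₂ 0, ⁅g₃ m, g₁ (n - 1 - m)⁆⁆ ∧
       I • ⁅g₃ 0, g₃ n⁆ = ⁅g₃ 0, ⁅g₁ m, g₂ (n - 1 - m)⁆⁆))
    (h2 : ∀ m, m ≤ n - 1 →
      (⁅g₁ 0, g₁ n⁆ = -⁅g₂ m, g₂ (n - m)⁆ - ⁅g₃ (n - m - 1), g₃ (m + 1)⁆ ∧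
       ⁅g₂ 0, g₂ n⁆ = -⁅g₃ m, g₃ (n - m)⁆ - ⁅g₁ (n - m - 1), g₁ (m + 1)⁆ ∧
       ⁅g₃ 0, g₃ n⁆ = -⁅g₁ m, g₁ (n - m)⁆ - ⁅g₂ (n - m - 1), g₂ (m + 1)⁆)) :
    ⁅g₁ 0, g₁ n⁆ = 0 ∧ ⁅g₂ 0, g₂ n⁆ = 0 ∧ ⁅g₃ 0, g₃ n⁆ = 0 :=
  stmt1_general g₁ g₂ g₃ n hn h2
end

section
/- With y₁^± = (∓i·t^{±1}) ⊗ s₁, y₂^± = (i·t^{±1}) ⊗ s₂, y₃^± = i ⊗ s₃ in the loop algebra sl(2,ℂ)[t,t⁻¹], the Serre-type relations hold: [y₂^±, [y₁^±, [y₁^±, y₂^±]]] = 0 and [y₂^±, [y₂^±, [y₂^±, y₁^±]]] + [y₁^±, [y₁^±, [y₁^±, y₂^±]]] = 0. -/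
/-!
In the loop algebra `⁅f ⊗ x, g ⊗ y⁆ = f g ⊗ ⁅x, y⁆`, so an iterated bracket of monomials `c tᵏ ⊗ s`
is again such a monomial, carrying the iterated bracket in `sl(2, ℂ)`. There `ad(s₁)²` fixes `s₂`
and `ad(s₂)²` fixes `s₁`, so `⁅y₂, ⁅y₁, ⁅y₁, y₂⁆⁆⁆` is a multiple of `⁅s₂, s₂⁆ = 0`, while the two
quartic brackets of the second relation are `t⁴ ⊗ ⁅s₂, s₁⁆` and `t⁴ ⊗ ⁅s₁, s₂⁆` with coefficients
`b³a` and `a³b`, which agree because `a² = b² = -1`.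
-/

open TensorProduct Complex

/-- An element `c·t^k ⊗ s` of the loop algebra `ℂ[t,t⁻¹] ⊗ sl(2,ℂ)`. -/
noncomputable def loopElt {L : Type*} [LieRing L] [LieAlgebra ℂ L]
    (c : ℂ) (k : ℤ) (s : L) : LaurentPolynomial ℂ ⊗[ℂ] L :=
  (c • LaurentPolynomial.T k) ⊗ₜ[ℂ] s

section LoopAlgebra

variable {L : Type*} [LieRing L] [LieAlgebra ℂ L]

lemma loopElt_lie_loopElt (c d : ℂ) (k l : ℤ) (s t : L) :
    ⁅loopElt c k s, loopElt d l t⁆ = loopElt (c * d) (k + l) ⁅s, t⁆ := by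
  rw [loopElt, loopElt, LieAlgebra.ExtendScalars.bracket_tmul, smul_mul_smul_comm,
    ← LaurentPolynomial.T_add, loopElt]

lemma loopElt_zero (c : ℂ) (k : ℤ) : loopElt c k (0 : L) = 0 :=
  tmul_zero _ _

lemma loopElt_neg (c : ℂ) (k : ℤ) (s : L) : loopElt c k (-s) = -loopElt c k s :=
  tmul_neg _ _

lemma lie_lie_eq_self_of_lie_eq_I_smul {a b c : L} (hab : ⁅a, b⁆ = I • c)
    (hbc : ⁅b, c⁆ = I • a) : ⁅b, ⁅b, a⁆⁆ = a := by
  rw [← lie_skew b a, hab, lie_neg, lie_smul, hbc, smul_smul, I_mul_I, neg_one_smul, neg_neg]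

lemma lie_loopElt_lie_lie_eq_zero {u v : L} (huv : ⁅u, ⁅u, v⁆⁆ = v) (a b : ℂ) (k l : ℤ) :
    ⁅loopElt b l v, ⁅loopElt a k u, ⁅loopElt a k u, loopElt b l v⁆⁆⁆ = 0 := by
  simp only [loopElt_lie_loopElt, huv, lie_self, loopElt_zero]

lemma loopElt_lie_lie_lie_add_eq_zero {u v : L} (huv : ⁅u, ⁅u, v⁆⁆ = v) (hvu : ⁅v, ⁅v, u⁆⁆ = u)
    {a b : ℂ} (hab : a ^ 2 = b ^ 2) (k : ℤ) :
    ⁅loopElt b k v, ⁅loopElt b k v, ⁅loopElt b k v, loopElt a k u⁆⁆⁆ +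
      ⁅loopElt a k u, ⁅loopElt a k u, ⁅loopElt a k u, loopElt b k v⁆⁆⁆ = 0 := by
  have hcoeff : b * (b * (b * a)) = a * (a * (a * b)) := by linear_combination (-(a * b)) * hab
  simp only [loopElt_lie_loopElt, huv, hvu]
  rw [← lie_skew, loopElt_neg, hcoeff, neg_add_cancel]

end LoopAlgebra

/-- Serre-type relations (32)-(33) in the loop algebra:
`⁅y₂^±, ⁅y₁^±, ⁅y₁^±, y₂^±⁆⁆⁆ = 0` and
`⁅y₂^±, ⁅y₂^±, ⁅y₂^±, y₁^±⁆⁆⁆ + ⁅y₁^±, ⁅y₁^±, ⁅y₁^±, y₂^±⁆⁆⁆ = 0`. -/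
theorem stmt12 {L : Type*} [LieRing L] [LieAlgebra ℂ L] (s₁ s₂ s₃ : L)
    (h12 : ⁅s₁, s₂⁆ = I • s₃) (h23 : ⁅s₂, s₃⁆ = I • s₁)
    (h31 : ⁅s₃, s₁⁆ = I • s₂) :
    letI y1p := loopElt (-I) 1 s₁
    letI y1m := loopElt I (-1) s₁
    letI y2p := loopElt I 1 s₂
    letI y2m := loopElt I (-1) s₂
    (⁅y2p, ⁅y1p, ⁅y1p, y2p⁆⁆⁆ = 0) ∧
    (⁅y2m, ⁅y1m, ⁅y1m, y2m⁆⁆⁆ = 0) ∧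
    (⁅y2p, ⁅y2p, ⁅y2p, y1p⁆⁆⁆ + ⁅y1p, ⁅y1p, ⁅y1p, y2p⁆⁆⁆ = 0) ∧
    (⁅y2m, ⁅y2m, ⁅y2m, y1m⁆⁆⁆ + ⁅y1m, ⁅y1m, ⁅y1m, y2m⁆⁆⁆ = 0) := by
  have h₁ : ⁅s₁, ⁅s₁, s₂⁆⁆ = s₂ :=
    lie_lie_eq_self_of_lie_eq_I_smul (c := -s₃) (by rw [← lie_skew, h12, smul_neg])
      (by rw [lie_neg, ← lie_skew, h31, neg_neg])
  have h₂ : ⁅s₂, ⁅s₂, s₁⁆⁆ = s₁ := lie_lie_eq_self_of_lie_eq_I_smul h12 h23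
  exact ⟨lie_loopElt_lie_lie_eq_zero h₁ _ _ _ _, lie_loopElt_lie_lie_eq_zero h₁ _ _ _ _,
    loopElt_lie_lie_lie_add_eq_zero h₁ h₂ (neg_sq I) _, loopElt_lie_lie_lie_add_eq_zero h₁ h₂ rfl _⟩
end
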